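/- There exists a primitive root g modulo 233 such that the cosets X_i = g^i·H (0 ≤ i < 8, indices mod 8) of the subgroup H of 8th-power residues in 𝔽_233^× form a 4-color Directed Anti-Ramsey algebra, i.e., with m = 4: (1) for all i, X_i + X_i = ⋃_{j ≠ i+4} X_j; (2) for all i, X_i + X_{i+4} = 𝔽_233; (3) for all i, j with i ≠ j and j ≠ i+4, X_i + X_j = 𝔽_233 ∖ {0}. -/

import Mathlib

open Pointwise

/-- The set of nonzero `n`-th power residues in `𝔽_p = ZMod p`. -/
def Hpow (p n : ℕ) : Set (ZMod p) := {x | ∃ u : (ZMod p)ˣ, (u : ZMod p) ^ n = x}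

/-- The coset `X_i = g^i · H` of the subgroup of `n`-th power residues. -/
noncomputable def Xc (p n : ℕ) [Fact p.Prime] (g : ZMod p) (i : ℤ) : Set (ZMod p) :=
  g ^ i • Hpow p n

instance : Fact (Nat.Prime 233) := ⟨by norm_num⟩

/-!
Write `p - 1 = n k`. Raising to the `k`-th power sends the coset `X_i` to the `n`-th root of
unity `(g^k)^i`, and this characterises `X_i` (a generalised Euler criterion); in particular the
cosets are indexed by `i mod n` and are pairwise disjoint. A sumset `X_i + X_j` is stable under
multiplication by `H` and is carried to `X_{i+l} + X_{j+l}` by multiplication with `g^l`, so it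
suffices to know which of `0` and the coset representatives `g^r` lie in `X_0 + X_d`.
As `-1 ∈ X_m`, `0 ∈ X_i + X_j` exactly when `j ≡ i + m`. For `p = 233`, `n = 8`, `g = 3` the
`64` memberships `3^r ∈ X_0 + X_d` are decided by computation: all hold except `3^4 ∉ X_0 + X_0`.
-/

def IsDirectedAntiRamseyAlgebra (p n : ℕ) [Fact p.Prime] (m : ℤ) (g : ZMod p) : Prop :=
  (∀ i : ℤ, Xc p n g i + Xc p n g i =
      ⋃ j ∈ {j : ℤ | (j : ZMod n) ≠ ((i + m : ℤ) : ZMod n)}, Xc p n g j) ∧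
    (∀ i : ℤ, Xc p n g i + Xc p n g (i + m) = Set.univ) ∧
    (∀ i j : ℤ, (j : ZMod n) ≠ (i : ZMod n) → (j : ZMod n) ≠ ((i + m : ℤ) : ZMod n) →
      Xc p n g i + Xc p n g j = {(0 : ZMod p)}ᶜ)

theorem IsPrimitiveRoot.zpow_eq_zpow_iff {M : Type*} [CommGroupWithZero M] {ζ : M} {n : ℕ}
    [NeZero n] (h : IsPrimitiveRoot ζ n) (i j : ℤ) : ζ ^ i = ζ ^ j ↔ (i : ZMod n) = j := by
  have hζ : ζ ≠ 0 := h.ne_zero (NeZero.ne n)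
  rw [← div_eq_one_iff_eq (zpow_ne_zero j hζ), ← zpow_sub₀ hζ, h.zpow_eq_one_iff_dvd,
    ZMod.intCast_eq_intCast_iff_dvd_sub, dvd_sub_comm]

section PrimitiveRootModP

variable {p : ℕ} [Fact p.Prime] {g : ZMod p}

theorem IsPrimitiveRoot.ne_zero_of_card_sub_one (hg : IsPrimitiveRoot g (p - 1)) : g ≠ 0 :=
  hg.ne_zero (Nat.sub_ne_zero_of_lt (Fact.out : p.Prime).one_lt)

theorem IsPrimitiveRoot.pow_of_mul_eq_card_sub_one {n k : ℕ} (hg : IsPrimitiveRoot g (p - 1))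
    (hnk : n * k = p - 1) : IsPrimitiveRoot (g ^ k) n :=
  hg.pow (Nat.sub_pos_of_lt (Fact.out : p.Prime).one_lt) (by rw [← hnk, mul_comm])

end PrimitiveRootModP

namespace Xc

variable {p : ℕ} [Fact p.Prime] {n k : ℕ} {g : ZMod p}

theorem mem_iff {i : ℤ} {x : ZMod p} : x ∈ Xc p n g i ↔ ∃ u : (ZMod p)ˣ, g ^ i * u ^ n = x := by
  simp [Xc, Hpow, Set.mem_smul_set]

theorem zpow_mem (i : ℤ) : g ^ i ∈ Xc p n g i := mem_iff.2 ⟨1, by simp⟩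

theorem zero_notMem (hg : g ≠ 0) (i : ℤ) : (0 : ZMod p) ∉ Xc p n g i := by
  rw [mem_iff]
  rintro ⟨u, hu⟩
  exact mul_ne_zero (zpow_ne_zero i hg) (u ^ n).ne_zero (by simpa using hu)

theorem mul_mem (hg : g ≠ 0) {i j : ℤ} {x y : ZMod p} (hx : x ∈ Xc p n g i)
    (hy : y ∈ Xc p n g j) : x * y ∈ Xc p n g (i + j) := by
  obtain ⟨u, rfl⟩ := mem_iff.1 hx
  obtain ⟨v, rfl⟩ := mem_iff.1 hy
  exact mem_iff.2 ⟨u * v, by push_cast [zpow_add₀ hg, mul_pow]; ring⟩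

theorem exists_mem (hg : IsPrimitiveRoot g (p - 1)) {x : ZMod p} (hx : x ≠ 0) :
    ∃ t : ℤ, x ∈ Xc p n g t := by
  have : NeZero (p - 1) := ⟨Nat.sub_ne_zero_of_lt (Fact.out : p.Prime).one_lt⟩
  obtain ⟨t, -, rfl⟩ := hg.eq_pow_of_pow_eq_one (ZMod.pow_card_sub_one_eq_one hx)
  exact ⟨t, by simpa using zpow_mem (n := n) (t : ℤ)⟩

theorem unit_pow_smul (u : (ZMod p)ˣ) (i : ℤ) : (u : ZMod p) ^ n • Xc p n g i = Xc p n g i := by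
  ext x
  simp only [Set.mem_smul_set, mem_iff, smul_eq_mul]
  constructor
  · rintro ⟨_, ⟨v, rfl⟩, rfl⟩
    exact ⟨u * v, by push_cast [mul_pow]; ring⟩
  · rintro ⟨v, rfl⟩
    refine ⟨_, ⟨u⁻¹ * v, rfl⟩, ?_⟩
    push_cast
    rw [mul_pow, inv_pow, mul_left_comm, mul_inv_cancel_left₀ (pow_ne_zero n u.ne_zero)]

theorem add_sumset_eq_smul (hg : g ≠ 0) (l i j : ℤ) :
    Xc p n g (l + i) + Xc p n g (l + j) = g ^ l • (Xc p n g i + Xc p n g j) := by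
  simp only [Xc, zpow_add₀ hg, mul_smul, smul_add]

theorem mem_add_iff_of_mem {t i j : ℤ} {x y : ZMod p} (hx : x ∈ Xc p n g t)
    (hy : y ∈ Xc p n g t) : x ∈ Xc p n g i + Xc p n g j ↔ y ∈ Xc p n g i + Xc p n g j := by
  obtain ⟨u, rfl⟩ := mem_iff.1 hx
  obtain ⟨v, rfl⟩ := mem_iff.1 hy
  set w := v * u⁻¹
  have hw : ((w : ZMod p) ^ n) • (Xc p n g i + Xc p n g j) = Xc p n g i + Xc p n g j := by
    rw [smul_add, unit_pow_smul, unit_pow_smul]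
  have hwx : ((w : ZMod p) ^ n) • (g ^ t * u ^ n) = g ^ t * v ^ n := by
    simp only [w, smul_eq_mul, Units.val_mul, mul_pow, Units.val_inv_eq_inv_val, inv_pow]
    field_simp
  rw [← hwx, ← Set.smul_mem_smul_set_iff₀ (pow_ne_zero n w.ne_zero) _ (g ^ t * u ^ n), hw]

section CosetIndex

variable [NeZero n]

theorem mem_iff_pow_eq (hg : IsPrimitiveRoot g (p - 1)) (hnk : n * k = p - 1) {i : ℤ}
    {x : ZMod p} : x ∈ Xc p n g i ↔ x ^ k = (g ^ k) ^ i := by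
  have hp : p - 1 ≠ 0 := Nat.sub_ne_zero_of_lt (Fact.out : p.Prime).one_lt
  have hg0 : g ≠ 0 := hg.ne_zero hp
  have hk : k ≠ 0 := right_ne_zero_of_mul (hnk ▸ hp)
  have hgk : (g ^ i) ^ k = (g ^ k) ^ i := by
    rw [← zpow_natCast, ← zpow_mul, ← zpow_natCast g k, ← zpow_mul, mul_comm]
  rw [mem_iff]
  constructor
  · rintro ⟨u, rfl⟩
    rw [mul_pow, ← pow_mul, hnk, ZMod.pow_card_sub_one_eq_one u.ne_zero, mul_one, hgk]
  · intro hx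
    have hx0 : x ≠ 0 := by
      rintro rfl
      exact zpow_ne_zero i (pow_ne_zero k hg0) (by rw [← hx, zero_pow hk])
    have : NeZero (p - 1) := ⟨hp⟩
    obtain ⟨t, -, rfl⟩ := hg.eq_pow_of_pow_eq_one (ZMod.pow_card_sub_one_eq_one hx0)
    rw [← pow_mul, mul_comm, pow_mul, ← zpow_natCast (g ^ k),
      (hg.pow_of_mul_eq_card_sub_one hnk).zpow_eq_zpow_iff,
      ZMod.intCast_eq_intCast_iff_dvd_sub] at hx
    obtain ⟨q, hq⟩ := hx
    refine ⟨Units.mk0 (g ^ (-q)) (zpow_ne_zero _ hg0), ?_⟩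
    rw [Units.val_mk0, ← zpow_natCast, ← zpow_mul, ← zpow_add₀ hg0, ← zpow_natCast]
    congr 1
    linarith

theorem eq_of_intCast_eq (hg : IsPrimitiveRoot g (p - 1)) (hnk : n * k = p - 1) {i j : ℤ}
    (h : (i : ZMod n) = j) : Xc p n g i = Xc p n g j := by
  ext x
  rw [mem_iff_pow_eq hg hnk, mem_iff_pow_eq hg hnk,
    ((hg.pow_of_mul_eq_card_sub_one hnk).zpow_eq_zpow_iff i j).2 h]

theorem mem_iff_of_mem (hg : IsPrimitiveRoot g (p - 1)) (hnk : n * k = p - 1) {t j : ℤ}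
    {x : ZMod p} (hx : x ∈ Xc p n g t) : x ∈ Xc p n g j ↔ (j : ZMod n) = t := by
  rw [mem_iff_pow_eq hg hnk] at hx ⊢
  rw [hx, (hg.pow_of_mul_eq_card_sub_one hnk).zpow_eq_zpow_iff, eq_comm]

theorem zero_mem_add_iff (hg : IsPrimitiveRoot g (p - 1)) (hnk : n * k = p - 1) {m : ℤ}
    (hneg : -1 ∈ Xc p n g m) (i j : ℤ) :
    0 ∈ Xc p n g i + Xc p n g j ↔ (j : ZMod n) = ((i + m : ℤ) : ZMod n) := by
  have hg0 := hg.ne_zero_of_card_sub_one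
  rw [add_comm i m]
  constructor
  · rintro ⟨y, hy, z, hz, hyz⟩
    rw [eq_neg_of_add_eq_zero_right hyz, ← neg_one_mul] at hz
    exact (mem_iff_of_mem hg hnk (mul_mem hg0 hneg hy)).1 hz
  · intro h
    refine ⟨g ^ i, zpow_mem i, -1 * g ^ i, ?_, by ring⟩
    rw [eq_of_intCast_eq hg hnk h]
    exact mul_mem hg0 hneg (zpow_mem i)

theorem zpow_mem_add_iff (hg : IsPrimitiveRoot g (p - 1)) (hnk : n * k = p - 1) {m : ℤ}
    (htable : ∀ r d : ZMod n, g ^ r.val ∈ Xc p n g 0 + Xc p n g d.val ↔ ¬(d = 0 ∧ r = m))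
    (t i j : ℤ) : g ^ t ∈ Xc p n g i + Xc p n g j ↔
      ¬((j : ZMod n) = i ∧ (t : ZMod n) = ((i + m : ℤ) : ZMod n)) := by
  have hg0 := hg.ne_zero_of_card_sub_one
  set r : ZMod n := ((t - i : ℤ) : ZMod n)
  set d : ZMod n := ((j - i : ℤ) : ZMod n)
  have hval (a : ZMod n) : ((a.val : ℤ) : ZMod n) = a := by simp
  calc g ^ t ∈ Xc p n g i + Xc p n g j ↔ g ^ (t - i) ∈ Xc p n g 0 + Xc p n g (j - i) := by
        rw [← Set.smul_mem_smul_set_iff₀ (zpow_ne_zero i hg0) (Xc p n g 0 + Xc p n g (j - i)),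
          ← add_sumset_eq_smul hg0, add_zero, add_sub_cancel, smul_eq_mul, ← zpow_add₀ hg0,
          add_sub_cancel]
    _ ↔ g ^ r.val ∈ Xc p n g 0 + Xc p n g d.val := by
        rw [eq_of_intCast_eq hg hnk (hval d).symm]
        refine mem_add_iff_of_mem (zpow_mem _) ?_
        rw [eq_of_intCast_eq hg hnk (hval r).symm, ← zpow_natCast]
        exact zpow_mem _
    _ ↔ ¬(d = 0 ∧ r = m) := htable r d
    _ ↔ _ := by simp [r, d, sub_eq_iff_eq_add']

end CosetIndex

end Xc

theorem isDirectedAntiRamseyAlgebra_of_cyclotomic {p : ℕ} [Fact p.Prime] {n k : ℕ} [NeZero n]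
    {g : ZMod p} (hg : IsPrimitiveRoot g (p - 1)) (hnk : n * k = p - 1) {m : ℤ}
    (hm : (m : ZMod n) ≠ 0) (hneg : -1 ∈ Xc p n g m)
    (htable : ∀ r d : ZMod n, g ^ r.val ∈ Xc p n g 0 + Xc p n g d.val ↔ ¬(d = 0 ∧ r = m)) :
    IsDirectedAntiRamseyAlgebra p n m g := by
  have zero_mem := Xc.zero_mem_add_iff hg hnk hneg
  have key := Xc.zpow_mem_add_iff hg hnk htable
  refine ⟨fun i => ?_, fun i => ?_, fun i j hji hjm => ?_⟩ <;> ext x <;>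
    rcases eq_or_ne x 0 with rfl | hx
  · simp [zero_mem, Xc.zero_notMem hg.ne_zero_of_card_sub_one, hm]
  · obtain ⟨t, ht⟩ := Xc.exists_mem (n := n) hg hx
    simp only [Xc.mem_add_iff_of_mem ht (Xc.zpow_mem t), key, Set.mem_iUnion, Set.mem_ofPred_eq,
      Xc.mem_iff_of_mem hg hnk ht, exists_prop, true_and]
    exact ⟨fun h => ⟨t, h, rfl⟩, fun ⟨j, hj, hjt⟩ => hjt ▸ hj⟩
  · simp [zero_mem]
  · obtain ⟨t, ht⟩ := Xc.exists_mem (n := n) hg hx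
    simp [Xc.mem_add_iff_of_mem ht (Xc.zpow_mem t), key, hm]
  · simpa [zero_mem] using hjm
  · obtain ⟨t, ht⟩ := Xc.exists_mem (n := n) hg hx
    simp [Xc.mem_add_iff_of_mem ht (Xc.zpow_mem t), key, hji, hx]

set_option maxRecDepth 10000 in
theorem isPrimitiveRoot_three_zmod233 : IsPrimitiveRoot (3 : ZMod 233) 232 := by
  rw [IsPrimitiveRoot.iff_orderOf]
  refine orderOf_eq_of_pow_and_pow_div_prime (by norm_num)
    (ZMod.pow_card_sub_one_eq_one (by decide)) fun q hq hdvd => ?_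
  rw [show (232 : ℕ) = 2 ^ 3 * 29 by norm_num] at hdvd ⊢
  rcases (Nat.Prime.dvd_mul hq).1 hdvd with h | h
  · rw [(Nat.prime_dvd_prime_iff_eq hq Nat.prime_two).1 (hq.dvd_of_dvd_pow h)]
    decide
  · rw [(Nat.prime_dvd_prime_iff_eq hq (by norm_num)).1 h]
    decide

set_option maxRecDepth 10000 in
/-- `3 ^ r ∈ X_0 + X_d` for `p = 233`, `n = 8`, with membership read through `mem_iff_pow_eq`. -/
theorem sumset_table_233 : ∀ r d : ZMod 8,
    (∃ y : ZMod 233, y ^ 29 = 1 ∧ (3 ^ r.val - y) ^ 29 = (3 ^ 29) ^ d.val) ↔ ¬(d = 0 ∧ r = 4) := by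
  decide

/-- The cosets of the index-8 subgroup of `𝔽_233ˣ` form a 4-color Directed
Anti-Ramsey algebra. -/
theorem stmt_12 : ∃ g : ZMod 233, IsPrimitiveRoot g 232 ∧
    (∀ i : ℤ, Xc 233 8 g i + Xc 233 8 g i =
      ⋃ j ∈ {j : ℤ | (j : ZMod 8) ≠ ((i + 4 : ℤ) : ZMod 8)}, Xc 233 8 g j) ∧
    (∀ i : ℤ, Xc 233 8 g i + Xc 233 8 g (i + 4) = Set.univ) ∧
    (∀ i j : ℤ, (j : ZMod 8) ≠ (i : ZMod 8) → (j : ZMod 8) ≠ ((i + 4 : ℤ) : ZMod 8) →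
      Xc 233 8 g i + Xc 233 8 g j = {(0 : ZMod 233)}ᶜ) := by
  have hg := isPrimitiveRoot_three_zmod233
  have mem_iff (i : ℤ) (x : ZMod 233) : x ∈ Xc 233 8 3 i ↔ x ^ 29 = (3 ^ 29) ^ i :=
    Xc.mem_iff_pow_eq hg rfl
  refine ⟨3, hg, isDirectedAntiRamseyAlgebra_of_cyclotomic (m := 4) hg (k := 29) rfl (by decide)
    ((mem_iff 4 (-1)).2 (by decide)) fun r d => ?_⟩
  rw [Int.cast_ofNat, ← sumset_table_233 r d, Set.mem_add]
  simp only [mem_iff, zpow_zero, zpow_natCast]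
  refine exists_congr fun y => and_congr_right fun _ => ⟨?_, fun h => ⟨_, h, add_sub_cancel y _⟩⟩
  rintro ⟨z, hz, hyz⟩
  rwa [← hyz, add_sub_cancel_left]
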